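/- arXiv:2505.21102 — 5 statements merged into one kernel-verified Lean document; each statement's English description precedes it below -/
import Mathlib

section
/- For every integer M ≥ 1 and every strictly increasing sequence of positive reals 0 < w₁ < w₂ < ... < w_{M+1} < ∞, there exists a probability vector (p₁, ..., p_{M+1}) (nonnegative entries summing to 1) such that for all k ∈ {0, 1, ..., M-1}, ∑_{i=1}^{k+1} pᵢ wᵢ^k = ∑_{i=k+2}^{M+1} pᵢ wᵢ^k. -/
open Finset

/-- Admissible weights: positive and strictly increasing on `[0,n]`. -/
def BAdm (n : ℕ) (w : ℕ → ℝ) : Prop :=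
  0 < w 0 ∧ ∀ i j, i < j → j ≤ n → w i < w j

/-- The balanced moment system with `n+1` atoms and exponent sequence `e`. -/
def BBal (n : ℕ) (w p : ℕ → ℝ) (e : ℕ → ℕ) : Prop :=
  ∀ k < n, (∑ i ∈ range (k+1), p i * w i ^ e k)
    = ∑ i ∈ Ico (k+1) (n+1), p i * w i ^ e k

lemma BAdm.wpos {n : ℕ} {w : ℕ → ℝ} (h : BAdm n w) : ∀ i ≤ n, 0 < w i := by
  intro i hi
  rcases Nat.eq_zero_or_pos i with h0 | h0
  · simpa [h0] using h.1
  · exact h.1.trans (h.2 0 i h0 hi)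

lemma BAdm.mono {n : ℕ} {w : ℕ → ℝ} (h : BAdm n w) {i j : ℕ} (hij : i ≤ j) (hj : j ≤ n) :
    w i ≤ w j := by
  rcases eq_or_lt_of_le hij with rfl | hlt
  · exact le_refl _
  · exact (h.2 i j hlt hj).le

/-- Key "two exponents cannot balance at the same split" strict inequality. -/
lemma two_power {n s : ℕ} {w p : ℕ → ℝ} {E E' : ℕ}
    (hadm : BAdm n w) (hs : s < n) (hEE' : E < E')
    (hpos : ∀ i ≤ n, 0 < p i)
    (hbal : (∑ i ∈ range (s+1), p i * w i ^ E) = ∑ i ∈ Ico (s+1) (n+1), p i * w i ^ E) :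
    (∑ i ∈ range (s+1), p i * w i ^ E') < ∑ i ∈ Ico (s+1) (n+1), p i * w i ^ E' := by
  set d := E' - E with hd
  have hdpos : 1 ≤ d := by omega
  have hE' : E' = E + d := by omega
  have hwpos := hadm.wpos
  have hLpos : 0 < ∑ i ∈ range (s+1), p i * w i ^ E := by
    apply Finset.sum_pos
    · intro i hi
      have hi' : i ≤ n := by simp at hi; omega
      exact mul_pos (hpos i hi') (pow_pos (hwpos i hi') _)
    · exact ⟨0, by simp⟩
  have hws : 0 < w s := hwpos s (by omega)
  have hws1 : w s < w (s+1) := hadm.2 s (s+1) (by omega) (by omega)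
  -- LHS ≤ (w s)^d * LHS_E
  have h1 : (∑ i ∈ range (s+1), p i * w i ^ E') ≤ w s ^ d * ∑ i ∈ range (s+1), p i * w i ^ E := by
    rw [Finset.mul_sum]
    apply Finset.sum_le_sum
    intro i hi
    have hi' : i ≤ s := by simp at hi; omega
    have hin : i ≤ n := by omega
    have h2 : w i ^ d ≤ w s ^ d :=
      pow_le_pow_left₀ (hwpos i hin).le (hadm.mono hi' (by omega)) d
    calc p i * w i ^ E' = p i * w i ^ E * w i ^ d := by rw [hE', pow_add]; ring
      _ ≤ p i * w i ^ E * w s ^ d := by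
          apply mul_le_mul_of_nonneg_left h2
          exact le_of_lt (mul_pos (hpos i hin) (pow_pos (hwpos i hin) _))
      _ = w s ^ d * (p i * w i ^ E) := by ring
  have h2 : w s ^ d * (∑ i ∈ range (s+1), p i * w i ^ E)
      < w (s+1) ^ d * ∑ i ∈ range (s+1), p i * w i ^ E := by
    apply mul_lt_mul_of_pos_right _ hLpos
    exact pow_lt_pow_left₀ hws1 hws.le (by omega)
  have h3 : w (s+1) ^ d * (∑ i ∈ Ico (s+1) (n+1), p i * w i ^ E)
      ≤ ∑ i ∈ Ico (s+1) (n+1), p i * w i ^ E' := by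
    rw [Finset.mul_sum]
    apply Finset.sum_le_sum
    intro i hi
    simp only [Finset.mem_Ico] at hi
    have hin : i ≤ n := by omega
    have h4 : w (s+1) ^ d ≤ w i ^ d :=
      pow_le_pow_left₀ (hwpos (s+1) (by omega)).le (hadm.mono (by omega) hin) d
    calc w (s+1) ^ d * (p i * w i ^ E) ≤ w i ^ d * (p i * w i ^ E) := by
          apply mul_le_mul_of_nonneg_right h4
          exact le_of_lt (mul_pos (hpos i hin) (pow_pos (hwpos i hin) _))
      _ = p i * w i ^ E' := by rw [hE', pow_add]; ring
  calc (∑ i ∈ range (s+1), p i * w i ^ E') ≤ w s ^ d * ∑ i ∈ range (s+1), p i * w i ^ E := h1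
    _ < w (s+1) ^ d * ∑ i ∈ range (s+1), p i * w i ^ E := h2
    _ = w (s+1) ^ d * ∑ i ∈ Ico (s+1) (n+1), p i * w i ^ E := by rw [hbal]
    _ ≤ ∑ i ∈ Ico (s+1) (n+1), p i * w i ^ E' := h3

/-- deletion map: skip index `m`. -/
def dmap (m i : ℕ) : ℕ := if i < m then i else i + 1

lemma sum_dmap_lo (g : ℕ → ℝ) (m a b : ℕ) (hb : b ≤ m) :
    ∑ i ∈ Ico a b, g (dmap m i) = ∑ i ∈ Ico a b, g i := by
  apply Finset.sum_congr rfl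
  intro i hi
  simp only [Finset.mem_Ico] at hi
  have h : i < m := by omega
  simp [dmap, h]

lemma sum_dmap_hi (g : ℕ → ℝ) (m a b : ℕ) (ha : m ≤ a) :
    ∑ i ∈ Ico a b, g (dmap m i) = ∑ i ∈ Ico (a+1) (b+1), g i := by
  rw [Finset.sum_Ico_eq_sum_range, Finset.sum_Ico_eq_sum_range]
  have hb : b + 1 - (a + 1) = b - a := by omega
  rw [hb]
  apply Finset.sum_congr rfl
  intro i _
  have h1 : ¬ (a + i < m) := by omega
  have h2 : a + i + 1 = a + 1 + i := by omega
  simp [dmap, h1, h2]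

lemma sum_dmap_mid (g : ℕ → ℝ) (m a b : ℕ) (hg : g m = 0) (ham : a ≤ m) (hmb : m ≤ b) :
    ∑ i ∈ Ico a b, g (dmap m i) = ∑ i ∈ Ico a (b+1), g i := by
  have h1 : ∑ i ∈ Ico a m, g (dmap m i) + ∑ i ∈ Ico m b, g (dmap m i)
      = ∑ i ∈ Ico a b, g (dmap m i) :=
    Finset.sum_Ico_consecutive _ ham hmb
  rw [← h1, sum_dmap_lo g m a m le_rfl, sum_dmap_hi g m m b le_rfl]
  have h2 : ∑ i ∈ Ico a m, g i + ∑ i ∈ Ico m (b+1), g i = ∑ i ∈ Ico a (b+1), g i :=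
    Finset.sum_Ico_consecutive _ ham (by omega)
  have h3 : ∑ i ∈ Ico m (b+1), g i = g m + ∑ i ∈ Ico (m+1) (b+1), g i :=
    Finset.sum_eq_sum_Ico_succ_bot (by omega) g
  rw [← h2, h3, hg]
  ring

lemma BBal_congr {n : ℕ} {w w' p p' : ℕ → ℝ} {e : ℕ → ℕ}
    (hw : ∀ i ≤ n, w i = w' i) (hp : ∀ i ≤ n, p i = p' i)
    (h : BBal n w p e) : BBal n w' p' e := by
  intro k hk
  have h1 := h k hk
  have e1 : ∀ i ∈ range (k+1), p' i * w' i ^ e k = p i * w i ^ e k := by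
    intro i hi
    simp only [Finset.mem_range] at hi
    rw [hw i (by omega), hp i (by omega)]
  have e2 : ∀ i ∈ Ico (k+1) (n+1), p' i * w' i ^ e k = p i * w i ^ e k := by
    intro i hi
    simp only [Finset.mem_Ico] at hi
    rw [hw i (by omega), hp i (by omega)]
  rw [Finset.sum_congr rfl e1, Finset.sum_congr rfl e2]
  exact h1

lemma BBal_smul {n : ℕ} {w p : ℕ → ℝ} {e : ℕ → ℕ} (c : ℝ)
    (h : BBal n w p e) : BBal n w (fun i => c * p i) e := by
  intro k hk
  have h1 := h k hk
  simp only [mul_assoc]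
  rw [← Finset.mul_sum, ← Finset.mul_sum, h1]

lemma BBal_neg {n : ℕ} {w p : ℕ → ℝ} {e : ℕ → ℕ}
    (h : BBal n w p e) : BBal n w (fun i => -p i) e := by
  have := BBal_smul (-1) h
  simpa using this

lemma BBal_sub {n : ℕ} {w p q : ℕ → ℝ} {e : ℕ → ℕ}
    (hp : BBal n w p e) (hq : BBal n w q e) : BBal n w (fun i => p i - q i) e := by
  intro k hk
  have h1 := hp k hk
  have h2 := hq k hk
  simp only [sub_mul, Finset.sum_sub_distrib]
  rw [h1, h2]

/-- Rank-nullity: the system always has a nontrivial solution supported on `[0,n]`. -/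
lemma exists_nonzero_sol (n : ℕ) (hn : 1 ≤ n) (w : ℕ → ℝ) (e : ℕ → ℕ) :
    ∃ p : ℕ → ℝ, BBal n w p e ∧ (∀ i, n < i → p i = 0) ∧ ∃ i ≤ n, p i ≠ 0 := by
  classical
  set A : Matrix (Fin n) (Fin (n+1)) ℝ :=
    fun k i => (if (i:ℕ) ≤ (k:ℕ) then (1:ℝ) else -1) * w i ^ e k with hA
  have hnotinj : ¬ Function.Injective A.mulVecLin := by
    intro hinj
    have := LinearMap.finrank_le_finrank_of_injective hinj
    rw [Module.finrank_pi, Module.finrank_pi] at this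
    simp at this
  rw [Function.not_injective_iff] at hnotinj
  obtain ⟨x, y, hxy, hne⟩ := hnotinj
  set z : Fin (n+1) → ℝ := x - y with hz
  have hzne : z ≠ 0 := sub_ne_zero_of_ne hne
  have hzker : A.mulVecLin z = 0 := by
    rw [hz, map_sub, hxy, sub_self]
  set p : ℕ → ℝ := fun i => if h : i ≤ n then z ⟨i, by omega⟩ else 0 with hp
  have hpz : ∀ i : Fin (n+1), p (i : ℕ) = z i := by
    intro i
    have hi : (i : ℕ) ≤ n := by omega
    simp [hp, hi]
  refine ⟨p, ?_, ?_, ?_⟩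
  · intro k hk
    have hk' := congrFun hzker ⟨k, hk⟩
    have hk'' : ∑ i : Fin (n+1), A ⟨k, hk⟩ i * z i = 0 := by
      simpa [Matrix.mulVecLin, Matrix.mulVec, dotProduct] using hk'
    have hsum : ∑ i ∈ range (n+1),
        (if i ≤ k then (1:ℝ) else -1) * p i * w i ^ e k = 0 := by
      rw [← Fin.sum_univ_eq_sum_range
        (fun i => (if i ≤ k then (1:ℝ) else -1) * p i * w i ^ e k) (n+1)]
      rw [← hk'']
      apply Finset.sum_congr rfl
      intro i _
      rw [hpz i]
      simp only [hA]
      ring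
    have hsplit : ∑ i ∈ range (k+1), (if i ≤ k then (1:ℝ) else -1) * p i * w i ^ e k
        + ∑ i ∈ Ico (k+1) (n+1), (if i ≤ k then (1:ℝ) else -1) * p i * w i ^ e k
        = ∑ i ∈ range (n+1), (if i ≤ k then (1:ℝ) else -1) * p i * w i ^ e k :=
      Finset.sum_range_add_sum_Ico _ (by omega)
    have hL : ∑ i ∈ range (k+1), (if i ≤ k then (1:ℝ) else -1) * p i * w i ^ e k
        = ∑ i ∈ range (k+1), p i * w i ^ e k := by
      apply Finset.sum_congr rfl
      intro i hi
      simp only [Finset.mem_range] at hi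
      have : i ≤ k := by omega
      simp [this]
    have hR : ∑ i ∈ Ico (k+1) (n+1), (if i ≤ k then (1:ℝ) else -1) * p i * w i ^ e k
        = -∑ i ∈ Ico (k+1) (n+1), p i * w i ^ e k := by
      rw [← Finset.sum_neg_distrib]
      apply Finset.sum_congr rfl
      intro i hi
      simp only [Finset.mem_Ico] at hi
      have : ¬ i ≤ k := by omega
      simp [this]
    rw [hL, hR, hsum] at hsplit
    linarith
  · intro i hi
    have h : ¬ i ≤ n := by omega
    simp [hp, h]
  · have : ∃ i : Fin (n+1), z i ≠ 0 := by
      by_contra hcon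
      push_neg at hcon
      exact hzne (funext fun i => hcon i)
    obtain ⟨i, hi⟩ := this
    exact ⟨(i : ℕ), Nat.lt_succ_iff.mp i.isLt, by rw [hpz i]; exact hi⟩

def emap (m : ℕ) (e : ℕ → ℕ) (k : ℕ) : ℕ := if k < m then e k else e (k+1)

lemma emap_mono {m : ℕ} {e : ℕ → ℕ} (he : StrictMono e) : StrictMono (emap m e) := by
  apply strictMono_nat_of_lt_succ
  intro k
  by_cases h1 : k < m
  · by_cases h2 : k + 1 < m
    · simpa [emap, h1, h2] using he (by omega : k < k + 1)
    · simpa [emap, h1, h2] using he (by omega : k < k + 1 + 1)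
  · have h2 : ¬ k + 1 < m := by omega
    simpa [emap, h1, h2] using he (by omega : k + 1 < k + 1 + 1)

lemma reduced_adm {n m : ℕ} {w : ℕ → ℝ} (hadm : BAdm (n+1) w) :
    BAdm n (fun i => w (dmap m i)) := by
  constructor
  · exact hadm.wpos (dmap m 0) (by unfold dmap; split <;> omega)
  · intro i j hij hj
    apply hadm.2
    · unfold dmap; split <;> split <;> omega
    · unfold dmap; split <;> omega

lemma reduced_bal {n m : ℕ} {w p : ℕ → ℝ} {e : ℕ → ℕ} (hm : m ≤ n+1)
    (hbal : BBal (n+1) w p e) (hpm : p m = 0) :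
    BBal n (fun i => w (dmap m i)) (fun i => p (dmap m i)) (emap m e) := by
  intro k hk
  by_cases hkm : k < m
  · have hEk : emap m e k = e k := if_pos hkm
    rw [hEk, Finset.range_eq_Ico]
    have h1 := sum_dmap_lo (fun i => p i * w i ^ e k) m 0 (k+1) (by omega)
    have h2 := sum_dmap_mid (fun i => p i * w i ^ e k) m (k+1) (n+1)
      (by simp [hpm]) (by omega) (by omega)
    rw [h1, h2, ← Finset.range_eq_Ico]
    exact hbal k (by omega)
  · have hEk : emap m e k = e (k+1) := if_neg hkm
    rw [hEk, Finset.range_eq_Ico]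
    have h1 := sum_dmap_mid (fun i => p i * w i ^ e (k+1)) m 0 (k+1)
      (by simp [hpm]) (by omega) (by omega)
    have h2 := sum_dmap_hi (fun i => p i * w i ^ e (k+1)) m (k+1) (n+1) (by omega)
    rw [h1, h2, ← Finset.range_eq_Ico]
    exact hbal (k+1) (by omega)

lemma Ucontr {n m : ℕ} {w p : ℕ → ℝ} {e : ℕ → ℕ}
    (hadm : BAdm (n+1) w) (hmono : StrictMono e)
    (hbal : BBal (n+1) w p e) (hm : m ≤ n+1) (hpm : p m = 0)
    (hpos : ∀ i ≤ n, 0 < p (dmap m i)) : False := by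
  have hwpos := hadm.wpos
  rcases Nat.lt_or_ge m 1 with hm0 | hm1
  · -- m = 0
    have hm' : m = 0 := by omega
    subst hm'
    have h0 := hbal 0 (by omega)
    have hL : (∑ i ∈ range 1, p i * w i ^ e 0) = 0 := by simp [hpm]
    have h1 := sum_dmap_hi (fun i => p i * w i ^ e 0) 0 0 (n+1) (by omega)
    have hRpos : 0 < ∑ i ∈ Ico 0 (n+1), p (dmap 0 i) * w (dmap 0 i) ^ e 0 := by
      apply Finset.sum_pos
      · intro i hi
        simp only [Finset.mem_Ico] at hi
        have hi' : i ≤ n := by omega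
        have hd : dmap 0 i ≤ n + 1 := by unfold dmap; split <;> omega
        exact mul_pos (hpos i hi') (pow_pos (hwpos _ hd) _)
      · exact ⟨0, by simp⟩
    rw [hL, ← h1] at h0
    linarith
  rcases Nat.lt_or_ge m (n+1) with hmn | hmn
  · -- 1 ≤ m ≤ n
    have hadm' : BAdm n (fun i => w (dmap m i)) := reduced_adm hadm
    have hbal' := reduced_bal (by omega : m ≤ n+1) hbal hpm
    have horig := hbal m (by omega)
    have hL := sum_dmap_mid (fun i => p i * w i ^ e m) m 0 m
      (by simp [hpm]) (by omega) (by omega)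
    have hR := sum_dmap_hi (fun i => p i * w i ^ e m) m m (n+1) (by omega)
    rw [Finset.range_eq_Ico, ← hL, ← hR] at horig
    -- horig : ∑ i ∈ Ico 0 m, red = ∑ i ∈ Ico m (n+1), red  with exponent e m
    have hred := hbal' (m-1) (by omega)
    have hm1' : m - 1 + 1 = m := by omega
    rw [hm1'] at hred
    have hEE' : emap m e (m-1) < e m := by
      unfold emap
      rw [if_pos (by omega : m - 1 < m)]
      exact hmono (by omega)
    have hstrict := two_power (p := fun i => p (dmap m i)) hadm'
      (by omega : m - 1 < n) hEE' hpos (by rw [hm1']; exact hred)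
    rw [hm1'] at hstrict
    rw [Finset.range_eq_Ico] at hstrict
    linarith
  · -- m = n+1
    have hm' : m = n + 1 := by omega
    subst hm'
    have h0 := hbal n (by omega)
    have hR : (∑ i ∈ Ico (n+1) (n+1+1), p i * w i ^ e n) = 0 := by
      rw [Finset.sum_Ico_eq_sum_range]
      simp [hpm]
    have h1 := sum_dmap_lo (fun i => p i * w i ^ e n) (n+1) 0 (n+1) (by omega)
    have hLpos : 0 < ∑ i ∈ Ico 0 (n+1), p (dmap (n+1) i) * w (dmap (n+1) i) ^ e n := by
      apply Finset.sum_pos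
      · intro i hi
        simp only [Finset.mem_Ico] at hi
        have hi' : i ≤ n := by omega
        have hd : dmap (n+1) i ≤ n + 1 := by unfold dmap; split <;> omega
        exact mul_pos (hpos i hi') (pow_pos (hwpos _ hd) _)
      · exact ⟨0, by simp⟩
    rw [Finset.range_eq_Ico, ← h1] at h0
    rw [hR] at h0
    linarith

def GoodU (n : ℕ) : Prop := ∀ (w : ℕ → ℝ) (e : ℕ → ℕ) (p : ℕ → ℝ) (m : ℕ),
  BAdm n w → StrictMono e → BBal n w p e → m ≤ n → p m = 0 → ∀ i ≤ n, p i = 0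
def GoodE (n : ℕ) : Prop := ∀ (w : ℕ → ℝ) (e : ℕ → ℕ),
  BAdm n w → StrictMono e → ∃ p, BBal n w p e ∧ ∀ i ≤ n, 0 < p i

lemma goodU_zero : GoodU 0 := by
  intro w e p m _ _ _ hm h0 i hi
  interval_cases m
  interval_cases i
  exact h0

lemma goodE_zero : GoodE 0 := by
  intro w e _ _
  exact ⟨fun _ => 1, fun k hk => by omega, fun i _ => one_pos⟩

/-- All coordinates of a not-identically-zero solution are nonzero. -/
lemma nonvanish {n : ℕ} {w p : ℕ → ℝ} {e : ℕ → ℕ} (hU : GoodU n)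
    (hadm : BAdm n w) (hmono : StrictMono e) (hbal : BBal n w p e)
    (hnz : ∃ i ≤ n, p i ≠ 0) : ∀ m ≤ n, p m ≠ 0 := by
  intro m hm h0
  obtain ⟨i, hi, hine⟩ := hnz
  exact hine (hU w e p m hadm hmono hbal hm h0 i hi)

/-- Sign coherence at a level where both U and E hold. -/
lemma signCoh {n : ℕ} (hU : GoodU n) (hE : GoodE n) {w p : ℕ → ℝ} {e : ℕ → ℕ}
    (hadm : BAdm n w) (hmono : StrictMono e) (hbal : BBal n w p e)
    (hnz : ∃ i ≤ n, p i ≠ 0) :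
    (∀ i ≤ n, 0 < p i) ∨ (∀ i ≤ n, p i < 0) := by
  have hne := nonvanish hU hadm hmono hbal hnz
  obtain ⟨v, hv, hvpos⟩ := hE w e hadm hmono
  set c : ℝ := p 0 / v 0 with hc
  have hv0 : v 0 ≠ 0 := ne_of_gt (hvpos 0 (by omega))
  have hr : BBal n w (fun i => p i - c * v i) e := BBal_sub hbal (BBal_smul c hv)
  have hr0 : p 0 - c * v 0 = 0 := by
    rw [hc, div_mul_cancel₀ _ hv0]; ring
  have hzero := hU w e (fun i => p i - c * v i) 0 hadm hmono hr (by omega) hr0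
  have hpc : ∀ i ≤ n, p i = c * v i := by
    intro i hi
    have h := hzero i hi
    linarith
  have hcne : c ≠ 0 := by
    intro h0
    exact hne 0 (by omega) (by rw [hpc 0 (by omega), h0]; ring)
  rcases lt_or_gt_of_ne hcne with hneg | hpos
  · right
    intro i hi
    rw [hpc i hi]
    exact mul_neg_of_neg_of_pos hneg (hvpos i hi)
  · left
    intro i hi
    rw [hpc i hi]
    exact mul_pos hpos (hvpos i hi)

/-- The induction step for `U`. -/
lemma Ustep {n : ℕ} (hU : GoodU n) (hE : GoodE n) : GoodU (n+1) := by
  intro w e p m hadm hmono hbal hm hpm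
  by_contra hcon
  push_neg at hcon
  obtain ⟨i₀, hi₀, hi₀ne⟩ := hcon
  have hadm' : BAdm n (fun i => w (dmap m i)) := reduced_adm hadm
  have hbal' := reduced_bal hm hbal hpm
  have hmono' := emap_mono (m := m) hmono
  have hnz' : ∃ i ≤ n, p (dmap m i) ≠ 0 := by
    rcases Nat.lt_or_ge i₀ m with h | h
    · exact ⟨i₀, by omega, by unfold dmap; rw [if_pos h]; exact hi₀ne⟩
    · have hgt : m < i₀ := by
        rcases Nat.eq_or_lt_of_le h with h' | h'
        · exact absurd (h' ▸ hpm) hi₀ne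
        · exact h'
      refine ⟨i₀ - 1, by omega, ?_⟩
      unfold dmap
      rw [if_neg (by omega)]
      have : i₀ - 1 + 1 = i₀ := by omega
      rw [this]
      exact hi₀ne
  rcases signCoh hU hE hadm' hmono' hbal' hnz' with hpos | hneg
  · exact absurd (Ucontr hadm hmono hbal hm hpm hpos) id
  · refine absurd (Ucontr (p := fun i => -p i) hadm hmono (BBal_neg hbal) hm
      (by simp [hpm]) ?_) id
    intro i hi
    have := hneg i hi
    simpa using this

/-- Deformed weight vector: atoms `< n` keep weight `w`, atoms `≥ n` get weight `t`. -/
def Wt (n : ℕ) (w : ℕ → ℝ) (t : ℝ) : ℕ → ℝ := fun i => if i < n then w i else t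

/-- Merge the last two atoms. -/
def mrg (n : ℕ) (p : ℕ → ℝ) : ℕ → ℝ := fun i => if i < n then p i else p n + p (n+1)

lemma tail_dom {n : ℕ} {w r : ℕ → ℝ} {e : ℕ → ℕ}
    (hadm : BAdm n w) (hmono : StrictMono e) (hbal : BBal n w r e)
    (hpos : ∀ i ≤ n, 0 < r i) :
    (∑ i ∈ range n, r i * w i ^ e n) < r n * w n ^ e n := by
  rcases Nat.eq_zero_or_pos n with h0 | h1
  · subst h0
    simp only [Finset.range_zero, Finset.sum_empty]
    exact mul_pos (hpos 0 le_rfl) (pow_pos (hadm.wpos 0 le_rfl) _)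
  · have hs : n - 1 < n := by omega
    have hEE' : e (n-1) < e n := hmono (by omega)
    have hbal' := hbal (n-1) (by omega)
    have hn1 : n - 1 + 1 = n := by omega
    rw [hn1] at hbal'
    have h := two_power hadm hs hEE' hpos (by rw [hn1]; exact hbal')
    rw [hn1] at h
    have hsing : Ico n (n+1) = {n} := Nat.Ico_succ_singleton n
    rw [hsing, Finset.sum_singleton] at h
    exact h

lemma merge_bal {n : ℕ} {w p : ℕ → ℝ} {e : ℕ → ℕ}
    (hbal : BBal (n+1) (Wt (n+1) w (w n)) p e) :
    BBal n w (mrg n p) e := by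
  intro k hk
  have h := hbal k (by omega)
  have hL : (∑ i ∈ range (k+1), p i * Wt (n+1) w (w n) i ^ e k)
      = ∑ i ∈ range (k+1), mrg n p i * w i ^ e k := by
    apply Finset.sum_congr rfl
    intro i hi
    simp only [Finset.mem_range] at hi
    have h1 : i < n := by omega
    have h2 : i < n + 1 := by omega
    simp [Wt, mrg, h1, h2]
  have hsplit1 : (∑ i ∈ Ico (k+1) (n+1+1), p i * Wt (n+1) w (w n) i ^ e k)
      = (∑ i ∈ Ico (k+1) (n+1), p i * Wt (n+1) w (w n) i ^ e k)
        + p (n+1) * Wt (n+1) w (w n) (n+1) ^ e k :=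
    Finset.sum_Ico_succ_top (by omega) _
  have hsplit2 : (∑ i ∈ Ico (k+1) (n+1), p i * Wt (n+1) w (w n) i ^ e k)
      = (∑ i ∈ Ico (k+1) n, p i * Wt (n+1) w (w n) i ^ e k)
        + p n * Wt (n+1) w (w n) n ^ e k :=
    Finset.sum_Ico_succ_top (by omega) _
  have hmid : (∑ i ∈ Ico (k+1) n, p i * Wt (n+1) w (w n) i ^ e k)
      = ∑ i ∈ Ico (k+1) n, p i * w i ^ e k := by
    apply Finset.sum_congr rfl
    intro i hi
    simp only [Finset.mem_Ico] at hi
    have h1 : i < n + 1 := by omega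
    simp [Wt, h1]
  have hWn : Wt (n+1) w (w n) n = w n := by simp [Wt]
  have hWn1 : Wt (n+1) w (w n) (n+1) = w n := by simp [Wt]
  have hRsplit : (∑ i ∈ Ico (k+1) (n+1), mrg n p i * w i ^ e k)
      = (∑ i ∈ Ico (k+1) n, mrg n p i * w i ^ e k) + mrg n p n * w n ^ e k :=
    Finset.sum_Ico_succ_top (by omega) _
  have hRmid : (∑ i ∈ Ico (k+1) n, mrg n p i * w i ^ e k)
      = ∑ i ∈ Ico (k+1) n, p i * w i ^ e k := by
    apply Finset.sum_congr rfl
    intro i hi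
    simp only [Finset.mem_Ico] at hi
    simp [mrg, hi.2]
  have hmrgn : mrg n p n = p n + p (n+1) := by simp [mrg]
  rw [hL] at h
  rw [hsplit1, hsplit2, hmid, hWn, hWn1] at h
  rw [hRsplit, hRmid, hmrgn]
  linarith

/-- The degenerate endpoint has a strictly positive solution. -/
lemma deg_pos {n : ℕ} {w : ℕ → ℝ} {e : ℕ → ℕ}
    (hadm : BAdm n w) (hmono : StrictMono e) (hE : GoodE n) :
    ∃ q, BBal (n+1) (Wt (n+1) w (w n)) q e ∧ ∀ i ≤ n+1, 0 < q i := by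
  obtain ⟨r, hr, hrpos⟩ := hE w e hadm hmono
  set a : ℝ := w n with ha
  have hapos : 0 < a := hadm.wpos n le_rfl
  set E : ℕ := e n with hE'
  have haE : 0 < a ^ E := pow_pos hapos _
  set S : ℝ := ∑ i ∈ range n, r i * w i ^ E with hS
  have hS0 : 0 ≤ S := by
    apply Finset.sum_nonneg
    intro i hi
    simp only [Finset.mem_range] at hi
    exact le_of_lt (mul_pos (hrpos i (by omega)) (pow_pos (hadm.wpos i (by omega)) _))
  have hSlt : S < r n * a ^ E := tail_dom hadm hmono hr hrpos
  obtain ⟨δ, hδ⟩ : ∃ δ : ℝ, δ = S / a ^ E := ⟨_, rfl⟩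
  have hδ0 : 0 ≤ δ := by rw [hδ]; exact div_nonneg hS0 haE.le
  have hδlt : δ < r n := by rw [hδ]; exact (div_lt_iff₀ haE).mpr hSlt
  set q : ℕ → ℝ := fun i => if i < n then r i else if i = n then (r n - δ)/2 else (r n + δ)/2
    with hq
  have hqlt : ∀ i < n, q i = r i := by intro i hi; simp [hq, hi]
  have hqn : q n = (r n - δ)/2 := by simp [hq]
  have hqn1 : q (n+1) = (r n + δ)/2 := by
    simp only [hq]
    rw [if_neg (by omega), if_neg (by omega)]
  refine ⟨q, ?_, ?_⟩
  · intro k hk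
    have hWlt : ∀ i < n + 1, Wt (n+1) w a i = w i := by intro i hi; simp [Wt, hi]
    have hWn1 : Wt (n+1) w a (n+1) = a := by simp [Wt]
    rcases Nat.lt_or_ge k n with hkn | hkn
    · -- k < n : reduce to r's equation at k
      have hrk := hr k hkn
      have hL : (∑ i ∈ range (k+1), q i * Wt (n+1) w a i ^ e k)
          = ∑ i ∈ range (k+1), r i * w i ^ e k := by
        apply Finset.sum_congr rfl
        intro i hi
        simp only [Finset.mem_range] at hi
        rw [hqlt i (by omega), hWlt i (by omega)]
      have hsplit1 : (∑ i ∈ Ico (k+1) (n+1+1), q i * Wt (n+1) w a i ^ e k)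
          = (∑ i ∈ Ico (k+1) (n+1), q i * Wt (n+1) w a i ^ e k)
            + q (n+1) * Wt (n+1) w a (n+1) ^ e k :=
        Finset.sum_Ico_succ_top (by omega) _
      have hsplit2 : (∑ i ∈ Ico (k+1) (n+1), q i * Wt (n+1) w a i ^ e k)
          = (∑ i ∈ Ico (k+1) n, q i * Wt (n+1) w a i ^ e k)
            + q n * Wt (n+1) w a n ^ e k :=
        Finset.sum_Ico_succ_top (by omega) _
      have hmid : (∑ i ∈ Ico (k+1) n, q i * Wt (n+1) w a i ^ e k)
          = ∑ i ∈ Ico (k+1) n, r i * w i ^ e k := by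
        apply Finset.sum_congr rfl
        intro i hi
        simp only [Finset.mem_Ico] at hi
        rw [hqlt i hi.2, hWlt i (by omega)]
      have hrsplit : (∑ i ∈ Ico (k+1) (n+1), r i * w i ^ e k)
          = (∑ i ∈ Ico (k+1) n, r i * w i ^ e k) + r n * w n ^ e k :=
        Finset.sum_Ico_succ_top (by omega) _
      have hWn : Wt (n+1) w a n = w n := hWlt n (by omega)
      rw [hL, hsplit1, hsplit2, hmid, hWn, hWn1, hqn, hqn1, hrk, hrsplit, ← ha]
      ring
    · -- k = n
      have hk' : k = n := by omega
      rw [hk']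
      have hL : (∑ i ∈ range (n+1), q i * Wt (n+1) w a i ^ e n)
          = S + q n * a ^ E := by
        rw [Finset.sum_range_succ]
        congr 1
        · rw [hS]
          apply Finset.sum_congr rfl
          intro i hi
          simp only [Finset.mem_range] at hi
          rw [hqlt i hi, hWlt i (by omega), hE']
        · rw [hWlt n (by omega), ← ha, hE']
      have hR : (∑ i ∈ Ico (n+1) (n+1+1), q i * Wt (n+1) w a i ^ e n)
          = q (n+1) * a ^ E := by
        rw [Nat.Ico_succ_singleton (n+1), Finset.sum_singleton, hWn1, hE']
      rw [hL, hR, hqn, hqn1]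
      have hδE : δ * a ^ E = S := by rw [hδ]; exact div_mul_cancel₀ S (ne_of_gt haE)
      linear_combination -hδE
  · intro i hi
    rcases Nat.lt_or_ge i n with h | h
    · rw [hqlt i h]; exact hrpos i (by omega)
    · rcases Nat.eq_or_lt_of_le h with h' | h'
      · rw [← h', hqn]; linarith
      · have h'' : i = n + 1 := by omega
        rw [h'', hqn1]; linarith

/-- Positive merge forces positivity of the degenerate solution itself. -/
lemma deg_sign_pos {n : ℕ} {w p : ℕ → ℝ} {e : ℕ → ℕ}
    (hadm : BAdm n w) (hmono : StrictMono e)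
    (hbal : BBal (n+1) (Wt (n+1) w (w n)) p e)
    (hmpos : ∀ i ≤ n, 0 < mrg n p i) : ∀ i ≤ n+1, 0 < p i := by
  set a : ℝ := w n with ha
  have hapos : 0 < a := hadm.wpos n le_rfl
  set E : ℕ := e n with hE'
  have haE : 0 < a ^ E := pow_pos hapos _
  have hplt : ∀ i < n, 0 < p i := by
    intro i hi
    have := hmpos i (by omega)
    simpa [mrg, hi] using this
  set Sp : ℝ := ∑ i ∈ range n, p i * w i ^ E with hSp
  have hSp0 : 0 ≤ Sp := by
    apply Finset.sum_nonneg
    intro i hi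
    simp only [Finset.mem_range] at hi
    exact le_of_lt (mul_pos (hplt i hi) (pow_pos (hadm.wpos i (by omega)) _))
  have hτ : 0 < p n + p (n+1) := by
    have := hmpos n le_rfl
    simpa [mrg] using this
  have hmb : BBal n w (mrg n p) e := merge_bal (by rw [← ha]; exact hbal)
  have htd := tail_dom hadm hmono hmb hmpos
  have htd' : Sp < (p n + p (n+1)) * a ^ E := by
    have h1 : (∑ i ∈ range n, mrg n p i * w i ^ e n) = Sp := by
      rw [hSp]
      apply Finset.sum_congr rfl
      intro i hi
      simp only [Finset.mem_range] at hi
      simp [mrg, hi, hE']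
    have h2 : mrg n p n = p n + p (n+1) := by simp [mrg]
    rw [h1, h2] at htd
    rw [← hE', ← ha] at htd
    exact htd
  -- equation at k = n
  have heq := hbal n (by omega)
  have hWlt : ∀ i < n + 1, Wt (n+1) w a i = w i := by intro i hi; simp [Wt, hi]
  have hWn1 : Wt (n+1) w a (n+1) = a := by simp [Wt]
  have hL : (∑ i ∈ range (n+1), p i * Wt (n+1) w a i ^ e n) = Sp + p n * a ^ E := by
    rw [Finset.sum_range_succ]
    congr 1
    · rw [hSp]
      apply Finset.sum_congr rfl
      intro i hi
      simp only [Finset.mem_range] at hi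
      rw [hWlt i (by omega), hE']
    · rw [hWlt n (by omega), ← ha, hE']
  have hR : (∑ i ∈ Ico (n+1) (n+1+1), p i * Wt (n+1) w a i ^ e n)
      = p (n+1) * a ^ E := by
    rw [Nat.Ico_succ_singleton (n+1), Finset.sum_singleton, hWn1, hE']
  rw [hL, hR] at heq
  -- heq : Sp + p n * a ^ E = p (n+1) * a ^ E
  have hpn : 0 < p n := by nlinarith
  have hpn1 : 0 < p (n+1) := by nlinarith
  intro i hi
  rcases Nat.lt_or_ge i n with h | h
  · exact hplt i h
  · rcases Nat.eq_or_lt_of_le h with h' | h'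
    · rw [← h']; exact hpn
    · have h'' : i = n + 1 := by omega
      rw [h'']; exact hpn1

/-- Sign coherence at the degenerate endpoint. -/
lemma deg_sign {n : ℕ} {w p : ℕ → ℝ} {e : ℕ → ℕ}
    (hadm : BAdm n w) (hmono : StrictMono e) (hU : GoodU n) (hE : GoodE n)
    (hbal : BBal (n+1) (Wt (n+1) w (w n)) p e)
    (hnz : ∃ i ≤ n+1, p i ≠ 0) :
    (∀ i ≤ n+1, 0 < p i) ∨ (∀ i ≤ n+1, p i < 0) := by
  have hmb : BBal n w (mrg n p) e := merge_bal hbal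
  by_cases hmz : ∃ i ≤ n, mrg n p i ≠ 0
  · rcases signCoh hU hE hadm hmono hmb hmz with hpos | hneg
    · exact Or.inl (deg_sign_pos hadm hmono hbal hpos)
    · right
      have hneg' : ∀ i ≤ n+1, 0 < -p i := by
        apply deg_sign_pos hadm hmono (BBal_neg hbal)
        intro i hi
        have := hneg i hi
        rcases Nat.lt_or_ge i n with h | h
        · simp only [mrg, if_pos h] at this ⊢
          linarith
        · have h' : ¬ i < n := by omega
          simp only [mrg, if_neg h'] at this ⊢
          linarith
      intro i hi
      have := hneg' i hi
      linarith
  · exfalso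
    push_neg at hmz
    have hplt : ∀ i < n, p i = 0 := by
      intro i hi
      have := hmz i (by omega)
      simpa [mrg, hi] using this
    have hsum : p n + p (n+1) = 0 := by
      have := hmz n le_rfl
      simpa [mrg] using this
    set a : ℝ := w n with ha
    have hapos : 0 < a := hadm.wpos n le_rfl
    have haE : 0 < a ^ e n := pow_pos hapos _
    have heq := hbal n (by omega)
    have hWlt : ∀ i < n + 1, Wt (n+1) w a i = w i := by intro i hi; simp [Wt, hi]
    have hWn1 : Wt (n+1) w a (n+1) = a := by simp [Wt]
    have hL : (∑ i ∈ range (n+1), p i * Wt (n+1) w a i ^ e n) = p n * a ^ e n := by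
      rw [Finset.sum_range_succ]
      have h0 : (∑ i ∈ range n, p i * Wt (n+1) w a i ^ e n) = 0 := by
        apply Finset.sum_eq_zero
        intro i hi
        simp only [Finset.mem_range] at hi
        rw [hplt i hi]
        ring
      rw [h0, hWlt n (by omega), ← ha, zero_add]
    have hR : (∑ i ∈ Ico (n+1) (n+1+1), p i * Wt (n+1) w a i ^ e n)
        = p (n+1) * a ^ e n := by
      rw [Nat.Ico_succ_singleton (n+1), Finset.sum_singleton, hWn1]
    rw [hL, hR] at heq
    have hpn : p n = p (n+1) := by
      have := mul_right_cancel₀ (ne_of_gt haE) heq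
      exact this
    have hpn0 : p n = 0 := by linarith
    have hpn10 : p (n+1) = 0 := by linarith
    obtain ⟨i, hi, hine⟩ := hnz
    rcases Nat.lt_or_ge i n with h | h
    · exact hine (hplt i h)
    · rcases Nat.eq_or_lt_of_le h with h' | h'
      · exact hine (h' ▸ hpn0)
      · have h'' : i = n + 1 := by omega
        exact hine (h'' ▸ hpn10)

open Filter Topology

lemma limit_bal {n : ℕ} {w : ℕ → ℝ} {e : ℕ → ℕ} {t : ℕ → ℝ} {t₀ : ℝ}
    (ht : Tendsto t atTop (𝓝 t₀)) {P : ℕ → ℕ → ℝ} {u : ℕ → ℝ}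
    (hP : ∀ j, BBal (n+1) (Wt (n+1) w (t j)) (P j) e)
    (hu : ∀ i, Tendsto (fun j => P j i) atTop (𝓝 (u i))) :
    BBal (n+1) (Wt (n+1) w t₀) u e := by
  intro k hk
  have hterm : ∀ i, Tendsto (fun j => P j i * Wt (n+1) w (t j) i ^ e k)
      atTop (𝓝 (u i * Wt (n+1) w t₀ i ^ e k)) := by
    intro i
    apply (hu i).mul
    apply Filter.Tendsto.pow
    by_cases h : i < n + 1
    · simp only [Wt, if_pos h]
      exact tendsto_const_nhds
    · simp only [Wt, if_neg h]
      exact ht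
  have hL := tendsto_finset_sum (range (k+1)) (fun i _ => hterm i)
  have hR := tendsto_finset_sum (Ico (k+1) (n+1+1)) (fun i _ => hterm i)
  have heq : (fun j => ∑ i ∈ range (k+1), P j i * Wt (n+1) w (t j) i ^ e k)
      = (fun j => ∑ i ∈ Ico (k+1) (n+1+1), P j i * Wt (n+1) w (t j) i ^ e k) :=
    funext fun j => hP j k hk
  rw [heq] at hL
  exact tendsto_nhds_unique hL hR

/-- The compact box used for extraction. -/
def Kbox (n : ℕ) : Set (ℕ → ℝ) :=
  Set.univ.pi (fun i => if i ≤ n+1 then Set.Icc (-1:ℝ) 1 else {0})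

lemma Kbox_compact (n : ℕ) : IsCompact (Kbox n) := by
  apply isCompact_univ_pi
  intro i
  by_cases h : i ≤ n+1
  · simp only [if_pos h]; exact isCompact_Icc
  · simp only [if_neg h]; exact isCompact_singleton

lemma Kbox_mem {n : ℕ} {q : ℕ → ℝ} (h1 : ∀ i ≤ n+1, |q i| ≤ 1)
    (h2 : ∀ i, n+1 < i → q i = 0) : q ∈ Kbox n := by
  rw [Kbox, Set.mem_univ_pi]
  intro i
  by_cases h : i ≤ n+1
  · simp only [if_pos h, Set.mem_Icc]
    have := h1 i h
    constructor <;> [linarith [abs_le.mp this |>.1]; linarith [abs_le.mp this |>.2]]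
  · simp only [if_neg h]
    exact h2 i (by omega)

lemma tendsto_inv_succ : Tendsto (fun j : ℕ => 1 / ((j:ℝ) + 1)) atTop (𝓝 0) :=
  tendsto_one_div_add_atTop_nhds_zero_nat

lemma normalize_pos {n : ℕ} {W' : ℕ → ℝ} {e : ℕ → ℕ} {p : ℕ → ℝ}
    (hbal : BBal (n+1) W' p e) (hpos : ∀ i ≤ n+1, 0 < p i) :
    ∃ q, BBal (n+1) W' q e ∧ (∀ i ≤ n+1, 0 < q i) ∧ (∑ i ∈ range (n+2), q i = 1)
      ∧ (∀ i, n+1 < i → q i = 0) ∧ (∀ i ≤ n+1, q i ≤ 1) := by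
  set σ := ∑ i ∈ range (n+2), p i with hσ
  have hσpos : 0 < σ :=
    Finset.sum_pos (fun i hi => hpos i (by simp at hi; omega)) ⟨0, by simp⟩
  refine ⟨fun i => if i ≤ n+1 then σ⁻¹ * p i else 0, ?_, ?_, ?_, ?_, ?_⟩
  · apply BBal_congr (fun i _ => rfl) _ (BBal_smul σ⁻¹ hbal)
    intro i hi; simp [hi]
  · intro i hi; simp only [if_pos hi]; exact mul_pos (inv_pos.mpr hσpos) (hpos i hi)
  · have h1 : (∑ i ∈ range (n+2), (if i ≤ n+1 then σ⁻¹ * p i else 0))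
        = σ⁻¹ * ∑ i ∈ range (n+2), p i := by
      rw [Finset.mul_sum]; apply Finset.sum_congr rfl; intro i hi
      simp only [Finset.mem_range] at hi
      rw [if_pos (by omega : i ≤ n+1)]
    rw [h1, ← hσ]
    exact inv_mul_cancel₀ (ne_of_gt hσpos)
  · intro i hi
    have h : ¬ i ≤ n+1 := by omega
    simp [h]
  · intro i hi
    simp only [if_pos hi]
    have hle : p i ≤ σ := by
      rw [hσ]
      apply Finset.single_le_sum (fun i' hi' => (hpos i' (by simp at hi'; omega)).le)
      simp; omega
    calc σ⁻¹ * p i ≤ σ⁻¹ * σ := mul_le_mul_of_nonneg_left hle (inv_pos.mpr hσpos).le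
      _ = 1 := inv_mul_cancel₀ (ne_of_gt hσpos)

lemma Estep {n : ℕ} (hUn : GoodU n) (hEn : GoodE n) (hU1 : GoodU (n+1)) : GoodE (n+1) := by
  intro w e hadm hmono
  have hadm_n : BAdm n w := ⟨hadm.1, fun i j hij hj => hadm.2 i j hij (by omega)⟩
  have hab : w n < w (n+1) := hadm.2 n (n+1) (by omega) (by omega)
  have hadm_t : ∀ t : ℝ, w n < t → BAdm (n+1) (Wt (n+1) w t) := by
    intro t htgt
    constructor
    · have h0 : (0:ℕ) < n + 1 := by omega
      simpa [Wt, h0] using hadm.1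
    · intro i j hij hj
      by_cases hjn : j < n + 1
      · have hin : i < n + 1 := by omega
        simpa [Wt, hin, hjn] using hadm.2 i j hij (by omega)
      · have hin : i < n + 1 := by omega
        have hwi : w i ≤ w n := by
          rcases Nat.eq_or_lt_of_le (by omega : i ≤ n) with h | h
          · rw [h]
          · exact (hadm.2 i n h (by omega)).le
        have h1 : Wt (n+1) w t i = w i := by simp [Wt, hin]
        rw [h1]
        simp only [Wt, if_neg hjn]
        linarith
  set A : Set ℝ := {t | t ∈ Set.Icc (w n) (w (n+1)) ∧
    ∃ p, BBal (n+1) (Wt (n+1) w t) p e ∧ ∀ i ≤ n+1, 0 < p i} with hA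
  have haA : w n ∈ A := ⟨⟨le_rfl, hab.le⟩, deg_pos hadm_n hmono hEn⟩
  have hAne : A.Nonempty := ⟨w n, haA⟩
  have hAbdd : BddAbove A := ⟨w (n+1), fun t ht => ht.1.2⟩
  set c := sSup A with hc
  have hcge : w n ≤ c := le_csSup hAbdd haA
  have hcle : c ≤ w (n+1) := csSup_le hAne (fun t ht => ht.1.2)
  -- Step 1: c ∈ A (closedness of A from below)
  have hcA : c ∈ A := by
    rcases eq_or_lt_of_le hcge with heq | hlt
    · exact heq ▸ haA
    · have hseq : ∀ j : ℕ, ∃ t', t' ∈ A ∧ c - 1/((j:ℝ)+1) < t' := by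
        intro j
        have hpos : 0 < 1/((j:ℝ)+1) := by positivity
        obtain ⟨t', ht', hlt'⟩ := exists_lt_of_lt_csSup hAne
          (by linarith : c - 1/((j:ℝ)+1) < sSup A)
        exact ⟨t', ht', hlt'⟩
      choose t htA htgt using hseq
      have htle : ∀ j, t j ≤ c := fun j => le_csSup hAbdd (htA j)
      have httend : Tendsto t atTop (𝓝 c) := by
        apply tendsto_of_tendsto_of_tendsto_of_le_of_le
          (g := fun j : ℕ => c - 1/((j:ℝ)+1)) (h := fun _ => c)
        · simpa using tendsto_const_nhds.sub tendsto_inv_succ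
        · exact tendsto_const_nhds
        · exact fun j => (htgt j).le
        · exact htle
      have hsol : ∀ j, ∃ q, BBal (n+1) (Wt (n+1) w (t j)) q e ∧ (∀ i ≤ n+1, 0 < q i)
          ∧ (∑ i ∈ range (n+2), q i = 1) ∧ (∀ i, n+1 < i → q i = 0)
          ∧ (∀ i ≤ n+1, q i ≤ 1) := by
        intro j
        obtain ⟨p, hp1, hp2⟩ := (htA j).2
        exact normalize_pos hp1 hp2
      choose P hPbal hPpos hPsum hPzero hPle using hsol
      have hPK : ∀ j, P j ∈ Kbox n := by
        intro j
        apply Kbox_mem _ (hPzero j)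
        intro i hi
        rw [abs_le]
        exact ⟨by linarith [(hPpos j i hi)], hPle j i hi⟩
      obtain ⟨u, huK, φ, hφ, hconv⟩ := (Kbox_compact n).tendsto_subseq hPK
      have hpt : ∀ i, Tendsto (fun j => P (φ j) i) atTop (𝓝 (u i)) :=
        fun i => tendsto_pi_nhds.mp hconv i
      have hsub : Tendsto (fun j => t (φ j)) atTop (𝓝 c) := httend.comp hφ.tendsto_atTop
      have hbalu : BBal (n+1) (Wt (n+1) w c) u e :=
        limit_bal hsub (fun j => hPbal (φ j)) hpt
      have husum : ∑ i ∈ range (n+2), u i = 1 := by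
        have h1 : Tendsto (fun j => ∑ i ∈ range (n+2), P (φ j) i) atTop
            (𝓝 (∑ i ∈ range (n+2), u i)) := tendsto_finset_sum _ (fun i _ => hpt i)
        have h2 : (fun j => ∑ i ∈ range (n+2), P (φ j) i) = fun _ => (1:ℝ) :=
          funext fun j => hPsum (φ j)
        rw [h2] at h1
        exact tendsto_nhds_unique h1 tendsto_const_nhds
      have hunn : ∀ i ≤ n+1, 0 ≤ u i :=
        fun i hi => ge_of_tendsto' (hpt i) (fun j => (hPpos (φ j) i hi).le)
      have hunz : ∃ i ≤ n+1, u i ≠ 0 := by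
        by_contra hcon; push_neg at hcon
        have h0 : ∑ i ∈ range (n+2), u i = 0 :=
          Finset.sum_eq_zero (fun i hi => hcon i (by simp at hi; omega))
        rw [husum] at h0
        exact one_ne_zero h0
      have hadm_c := hadm_t c hlt
      have hnv := nonvanish hU1 hadm_c hmono hbalu hunz
      exact ⟨⟨hcge, hcle⟩, u, hbalu,
        fun i hi => lt_of_le_of_ne (hunn i hi) (Ne.symm (hnv i hi))⟩
  -- Step 2: c = w (n+1)
  have hceq : c = w (n+1) := by
    by_contra hne'
    have hclt : c < w (n+1) := lt_of_le_of_ne hcle hne'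
    have hex : ∀ j : ℕ, ∃ s', s' ∈ Set.Icc (w n) (w (n+1))
        ∧ |s' - c| < 1/((j:ℝ)+1) ∧ s' ∉ A := by
      by_contra hcon
      push_neg at hcon
      obtain ⟨j, hj⟩ := hcon
      have hεpos : 0 < 1/((j:ℝ)+1) := by positivity
      set s' := min (c + 1/((j:ℝ)+1)/2) (w (n+1)) with hs'
      have hsgt : c < s' := lt_min (by linarith) hclt
      have hsmem : s' ∈ Set.Icc (w n) (w (n+1)) := ⟨le_trans hcge hsgt.le, min_le_right _ _⟩
      have hsd : |s' - c| < 1/((j:ℝ)+1) := by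
        rw [abs_lt]
        constructor
        · linarith
        · have h1 : s' ≤ c + 1/((j:ℝ)+1)/2 := min_le_left _ _
          linarith
      have hsA : s' ∈ A := hj s' hsmem hsd
      have : s' ≤ c := le_csSup hAbdd hsA
      linarith
    choose s hsmem hsd hsnA using hex
    have hstend : Tendsto s atTop (𝓝 c) := by
      rw [Metric.tendsto_atTop]
      intro ε hε
      obtain ⟨N, hN⟩ := exists_nat_one_div_lt hε
      refine ⟨N, fun j hj => ?_⟩
      have h1 : |s j - c| < 1/((j:ℝ)+1) := hsd j
      have h2 : 1/((j:ℝ)+1) ≤ 1/((N:ℝ)+1) := by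
        apply one_div_le_one_div_of_le (by positivity)
        have : (N:ℝ) ≤ (j:ℝ) := by exact_mod_cast hj
        linarith
      calc dist (s j) c = |s j - c| := Real.dist_eq _ _
        _ < 1/((j:ℝ)+1) := h1
        _ ≤ 1/((N:ℝ)+1) := h2
        _ < ε := hN
    have hsgta : ∀ j, w n < s j := by
      intro j
      rcases eq_or_lt_of_le (hsmem j).1 with h | h
      · exact absurd (h ▸ haA) (hsnA j)
      · exact h
    have hker : ∀ j, ∃ v, BBal (n+1) (Wt (n+1) w (s j)) v e
        ∧ (∀ i, n+1 < i → v i = 0) ∧ ∃ i ≤ n+1, v i ≠ 0 :=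
      fun j => exists_nonzero_sol (n+1) (by omega) _ e
    choose v hvbal hvz hvnz using hker
    have hvnv : ∀ j, ∀ m ≤ n+1, v j m ≠ 0 :=
      fun j => nonvanish hU1 (hadm_t _ (hsgta j)) hmono (hvbal j) (hvnz j)
    set N' : ℕ → ℝ := fun j => ∑ i ∈ range (n+2), |v j i| with hN'
    have hN'pos : ∀ j, 0 < N' j := by
      intro j
      apply Finset.sum_pos'
      · intro i _; exact abs_nonneg _
      · exact ⟨0, by simp, abs_pos.mpr (hvnv j 0 (by omega))⟩
    set cs : ℕ → ℝ := fun j => (if 0 < v j 0 then 1 else -1) * (N' j)⁻¹ with hcs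
    have hcsabs : ∀ j, |cs j| = (N' j)⁻¹ := by
      intro j
      simp only [hcs, abs_mul]
      rw [abs_inv, abs_of_pos (hN'pos j)]
      split <;> simp
    have hcsne : ∀ j, cs j ≠ 0 := by
      intro j
      simp only [hcs]
      apply mul_ne_zero
      · split <;> norm_num
      · exact inv_ne_zero (ne_of_gt (hN'pos j))
    set u' : ℕ → ℕ → ℝ := fun j i => cs j * v j i with hu'
    have hu'bal : ∀ j, BBal (n+1) (Wt (n+1) w (s j)) (u' j) e :=
      fun j => BBal_smul _ (hvbal j)
    have hu'0 : ∀ j, 0 < u' j 0 := by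
      intro j
      simp only [hu', hcs]
      have hNi := inv_pos.mpr (hN'pos j)
      rcases lt_trichotomy (v j 0) 0 with h | h | h
      · rw [if_neg (by linarith)]
        nlinarith
      · exact absurd h (hvnv j 0 (by omega))
      · rw [if_pos h]
        nlinarith
    have hu'absval : ∀ j i, |u' j i| = (N' j)⁻¹ * |v j i| := by
      intro j i
      simp only [hu', abs_mul, hcsabs j]
    have hu'abs : ∀ j, ∑ i ∈ range (n+2), |u' j i| = 1 := by
      intro j
      calc ∑ i ∈ range (n+2), |u' j i|
          = ∑ i ∈ range (n+2), (N' j)⁻¹ * |v j i| :=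
            Finset.sum_congr rfl (fun i _ => hu'absval j i)
        _ = (N' j)⁻¹ * ∑ i ∈ range (n+2), |v j i| := by rw [Finset.mul_sum]
        _ = (N' j)⁻¹ * N' j := rfl
        _ = 1 := inv_mul_cancel₀ (ne_of_gt (hN'pos j))
    have hu'le : ∀ j, ∀ i ≤ n+1, |u' j i| ≤ 1 := by
      intro j i hi
      have h1 : |v j i| ≤ N' j := by
        rw [hN']
        apply Finset.single_le_sum (fun i' _ => abs_nonneg (v j i'))
        simp; omega
      rw [hu'absval j i]
      calc (N' j)⁻¹ * |v j i| ≤ (N' j)⁻¹ * N' j :=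
            mul_le_mul_of_nonneg_left h1 (inv_pos.mpr (hN'pos j)).le
        _ = 1 := inv_mul_cancel₀ (ne_of_gt (hN'pos j))
    have hu'z : ∀ j, ∀ i, n+1 < i → u' j i = 0 := by
      intro j i hi
      simp [hu', hvz j i hi]
    have hu'bad : ∀ j, ∃ i ≤ n+1, u' j i < 0 := by
      intro j
      by_contra hcon
      push_neg at hcon
      apply hsnA j
      refine ⟨hsmem j, u' j, hu'bal j, ?_⟩
      intro i hi
      have hne0 : u' j i ≠ 0 := mul_ne_zero (hcsne j) (hvnv j i hi)
      exact lt_of_le_of_ne (hcon i hi) (Ne.symm hne0)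
    obtain ⟨ub, hubK, φ, hφ, hconv⟩ :=
      (Kbox_compact n).tendsto_subseq (fun j => Kbox_mem (hu'le j) (hu'z j))
    have hpt : ∀ i, Tendsto (fun j => u' (φ j) i) atTop (𝓝 (ub i)) :=
      fun i => tendsto_pi_nhds.mp hconv i
    have hsub : Tendsto (fun j => s (φ j)) atTop (𝓝 c) := hstend.comp hφ.tendsto_atTop
    have hbalub : BBal (n+1) (Wt (n+1) w c) ub e :=
      limit_bal hsub (fun j => hu'bal (φ j)) hpt
    have hubabs : ∑ i ∈ range (n+2), |ub i| = 1 := by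
      have h1 : Tendsto (fun j => ∑ i ∈ range (n+2), |u' (φ j) i|) atTop
          (𝓝 (∑ i ∈ range (n+2), |ub i|)) := tendsto_finset_sum _ (fun i _ => (hpt i).abs)
      have h2 : (fun j => ∑ i ∈ range (n+2), |u' (φ j) i|) = fun _ => (1:ℝ) :=
        funext fun j => hu'abs (φ j)
      rw [h2] at h1
      exact tendsto_nhds_unique h1 tendsto_const_nhds
    have hubnz : ∃ i ≤ n+1, ub i ≠ 0 := by
      by_contra hcon; push_neg at hcon
      have h0 : ∑ i ∈ range (n+2), |ub i| = 0 :=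
        Finset.sum_eq_zero (fun i hi => by rw [hcon i (by simp at hi; omega)]; exact abs_zero)
      rw [hubabs] at h0
      exact one_ne_zero h0
    have hub0 : 0 ≤ ub 0 := ge_of_tendsto' (hpt 0) (fun j => (hu'0 (φ j)).le)
    have hubpos : ∀ i ≤ n+1, 0 < ub i := by
      rcases eq_or_lt_of_le hcge with hceqa | hcgt
      · have hbal' : BBal (n+1) (Wt (n+1) w (w n)) ub e := by rw [hceqa]; exact hbalub
        rcases deg_sign hadm_n hmono hUn hEn hbal' hubnz with h | h
        · exact h
        · exact absurd (h 0 (by omega)) (by linarith)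
      · obtain ⟨-, q, hqbal, hqpos⟩ := hcA
        have hadm_c := hadm_t c hcgt
        have hubnv := nonvanish hU1 hadm_c hmono hbalub hubnz
        have hq0 : q 0 ≠ 0 := ne_of_gt (hqpos 0 (by omega))
        have hr : BBal (n+1) (Wt (n+1) w c) (fun i => ub i - (ub 0 / q 0) * q i) e :=
          BBal_sub hbalub (BBal_smul _ hqbal)
        have hr0 : ub 0 - (ub 0 / q 0) * q 0 = 0 := by
          rw [div_mul_cancel₀ _ hq0]; ring
        have hzero := hU1 _ e _ 0 hadm_c hmono hr (by omega) hr0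
        have hlampos : 0 < ub 0 / q 0 :=
          div_pos (lt_of_le_of_ne hub0 (Ne.symm (hubnv 0 (by omega)))) (hqpos 0 (by omega))
        intro i hi
        have h1 := hzero i hi
        have h2 : ub i = (ub 0 / q 0) * q i := by linarith
        rw [h2]
        exact mul_pos hlampos (hqpos i hi)
    have hev : ∀ᶠ j in atTop, ∀ i ∈ range (n+2), 0 < u' (φ j) i := by
      rw [eventually_all_finset]
      intro i hi
      simp only [Finset.mem_range] at hi
      exact Filter.Tendsto.eventually_const_lt (hubpos i (by omega)) (hpt i)
    obtain ⟨j, hj⟩ := hev.exists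
    obtain ⟨i, hi, hineg⟩ := hu'bad (φ j)
    have := hj i (by simp; omega)
    linarith
  rw [hceq] at hcA
  obtain ⟨-, p, hpbal, hppos⟩ := hcA
  refine ⟨p, ?_, hppos⟩
  apply BBal_congr _ (fun i _ => rfl) hpbal
  intro i hi
  by_cases h : i < n+1
  · simp [Wt, h]
  · have h2 : i = n+1 := by omega
    simp [Wt, h, h2]

theorem good_all (n : ℕ) : GoodU n ∧ GoodE n := by
  induction n with
  | zero => exact ⟨goodU_zero, goodE_zero⟩
  | succ n ih =>
    have hU := Ustep ih.1 ih.2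
    exact ⟨hU, Estep ih.1 ih.2 hU⟩

/-- For every integer `M ≥ 1` and strictly increasing positive reals
`w 0 < w 1 < ... < w M` (the paper's `w₁ < ... < w_{M+1}`, 0-indexed here),
there is a probability vector `p` on `{0,...,M}` such that for all `k < M`,
`∑_{i=0}^{k} p i * (w i)^k = ∑_{i=k+1}^{M} p i * (w i)^k`. -/
theorem balanced_moment_prob_vector_exists
    (M : ℕ) (hM : 1 ≤ M) (w : ℕ → ℝ)
    (hw0 : 0 < w 0)
    (hmono : ∀ i j, i < j → j < M + 1 → w i < w j) :
    ∃ p : ℕ → ℝ,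
      (∀ i, 0 ≤ p i) ∧
      (∑ i ∈ Finset.range (M + 1), p i = 1) ∧
      (∀ k < M,
        ∑ i ∈ Finset.range (k + 1), p i * w i ^ k
          = ∑ i ∈ Finset.Ico (k + 1) (M + 1), p i * w i ^ k) := by
  obtain ⟨n, rfl⟩ : ∃ n, M = n + 1 := ⟨M - 1, by omega⟩
  have hadm : BAdm (n+1) w := ⟨hw0, fun i j hij hj => hmono i j hij (by omega)⟩
  obtain ⟨p, hbal, hpos⟩ := (good_all (n+1)).2 w id hadm strictMono_id
  obtain ⟨q, hqbal, hqpos, hqsum, hqz, hqle⟩ := normalize_pos hbal hpos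
  refine ⟨q, ?_, ?_, ?_⟩
  · intro i
    rcases le_or_gt i (n+1) with h | h
    · exact (hqpos i h).le
    · rw [hqz i h]
  · simpa using hqsum
  · intro k hk
    exact hqbal k hk
end

section
/- Interpolation step for the inductive construction: let M ≥ 1, let 0 < w₁ < ... < w_{M+2}, let (p₁,...,p_{M+1}) and (q₁,...,q_{M+1}) be probability vectors such that ∑_{i=1}^{M} qᵢ wᵢ^{M-1} = q_{M+1} w_{M+2}^{M-1} (among possibly other conditions). Then there exists α ∈ [0,1] such that α ∑_{i=1}^{M+1} pᵢ wᵢ^M + (1-α) ∑_{i=1}^{M} qᵢ wᵢ^M = (1-α) q_{M+1} w_{M+2}^M. -/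
open Finset

/-- Interpolation step of the inductive construction (0-indexed: the paper's
`w₁ < ... < w_{M+2}` is `w 0 < ... < w (M+1)`, `p_{M+1}` is `p M`, `q_{M+1}` is `q M`,
`w_{M+2}` is `w (M+1)`).  Given probability vectors `p`, `q` on `M+1` points with
`∑_{i=0}^{M-1} q i * (w i)^(M-1) = q M * (w (M+1))^(M-1)`, there is `α ∈ [0,1]` with
`α ∑_{i=0}^{M} p i (w i)^M + (1-α) ∑_{i=0}^{M-1} q i (w i)^M = (1-α) q M (w (M+1))^M`. -/
theorem balanced_moment_interpolation_step
    (M : ℕ) (hM : 1 ≤ M) (w : ℕ → ℝ)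
    (hw0 : 0 < w 0)
    (hmono : ∀ i j, i < j → j < M + 2 → w i < w j)
    (p q : ℕ → ℝ)
    (hpnn : ∀ i, 0 ≤ p i) (hpsum : ∑ i ∈ Finset.range (M + 1), p i = 1)
    (hqnn : ∀ i, 0 ≤ q i) (hqsum : ∑ i ∈ Finset.range (M + 1), q i = 1)
    (hq : ∑ i ∈ Finset.range M, q i * w i ^ (M - 1)
        = q M * w (M + 1) ^ (M - 1)) :
    ∃ α : ℝ, α ∈ Set.Icc (0 : ℝ) 1 ∧
      α * ∑ i ∈ Finset.range (M + 1), p i * w i ^ M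
        + (1 - α) * ∑ i ∈ Finset.range M, q i * w i ^ M
        = (1 - α) * q M * w (M + 1) ^ M := by
  set A := ∑ i ∈ Finset.range (M + 1), p i * w i ^ M with hA
  set B := ∑ i ∈ Finset.range M, q i * w i ^ M with hB
  set C := q M * w (M + 1) ^ M with hC
  have hwpos : ∀ i, i < M + 2 → 0 < w i := by
    intro i hi
    rcases Nat.eq_zero_or_pos i with h | h
    · simpa [h] using hw0
    · exact hw0.trans (hmono 0 i h hi)
  have hApos : 0 < A := by
    have h1 : (w 0) ^ M ≤ A := by
      calc (w 0) ^ M = ∑ i ∈ Finset.range (M + 1), p i * w 0 ^ M := by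
            rw [← Finset.sum_mul, hpsum, one_mul]
        _ ≤ A := by
            apply Finset.sum_le_sum
            intro i hi
            have hi' : i < M + 2 := by
              have := Finset.mem_range.mp hi; omega
            have hw0i : w 0 ≤ w i := by
              rcases Nat.eq_zero_or_pos i with h | h
              · simp [h]
              · exact (hmono 0 i h hi').le
            exact mul_le_mul_of_nonneg_left
              (pow_le_pow_left₀ hw0.le hw0i M) (hpnn i)
    exact lt_of_lt_of_le (pow_pos hw0 M) h1
  have hBC : B ≤ C := by
    have hstep : B ≤ w (M + 1) * ∑ i ∈ Finset.range M, q i * w i ^ (M - 1) := by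
      rw [Finset.mul_sum]
      apply Finset.sum_le_sum
      intro i hi
      have hi' : i < M := Finset.mem_range.mp hi
      have hiw : 0 < w i := hwpos i (by omega)
      have hle : w i ≤ w (M + 1) := (hmono i (M + 1) (by omega) (by omega)).le
      have hpow : w i ^ M = w i ^ (M - 1) * w i := by
        rw [← pow_succ]; congr 1; omega
      calc q i * w i ^ M = q i * w i ^ (M - 1) * w i := by rw [hpow, mul_assoc]
        _ ≤ q i * w i ^ (M - 1) * w (M + 1) := by
            apply mul_le_mul_of_nonneg_left hle
            exact mul_nonneg (hqnn i) (pow_nonneg hiw.le _)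
        _ = w (M + 1) * (q i * w i ^ (M - 1)) := by ring
    rw [hq] at hstep
    have hpow : w (M + 1) * (q M * w (M + 1) ^ (M - 1)) = C := by
      rw [hC]
      have : w (M + 1) ^ M = w (M + 1) ^ (M - 1) * w (M + 1) := by
        rw [← pow_succ]; congr 1; omega
      rw [this]; ring
    linarith
  set D := A + (C - B) with hD
  have hDpos : 0 < D := by simp only [hD]; linarith
  refine ⟨(C - B) / D, ⟨div_nonneg (by linarith) hDpos.le,
    (div_le_one hDpos).mpr (by simp only [hD]; linarith)⟩, ?_⟩
  field_simp
  ring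
end

section
/- Tail bound via balanced moments: let f : ℕ₀ → ℝ₊ be nondecreasing and let W be a discrete random variable supported on {f(0), f(1), ..., f(M)} satisfying E[W^y 1{W ≤ f(y)}] = E[W^y 1{W > f(y)}] for all y ∈ {0, ..., M-1}. Then for any κ ≥ 1 and any i with i/κ ≤ M+1, P[W ≥ f(i)] ≤ ( f(⌊i/κ⌋) / f(i) )^{⌊i/κ⌋}. -/
open Finset

/-- Tail bound via balanced moments: `f : ℕ → ℝ₊` nondecreasing, `W` a discrete
random variable supported on `{f 0, ..., f M}` with point masses `p i` at `f i`,
satisfying `E[W^y 1{W ≤ f y}] = E[W^y 1{W > f y}]` for `y < M`.  Then for any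
real `κ ≥ 1` and any `i` with `i/κ ≤ M + 1`,
`P[W ≥ f i] ≤ (f ⌊i/κ⌋ / f i) ^ ⌊i/κ⌋`. -/
theorem balanced_moments_tail_bound
    (M : ℕ) (f : ℕ → ℝ) (hfpos : ∀ n, 0 < f n) (hfmono : Monotone f)
    (p : ℕ → ℝ) (hnn : ∀ i, 0 ≤ p i)
    (hsum : ∑ i ∈ Finset.range (M + 1), p i = 1)
    (hbal : ∀ y < M,
      ∑ i ∈ Finset.range (M + 1), (if f i ≤ f y then p i * f i ^ y else 0)
        = ∑ i ∈ Finset.range (M + 1), (if f y < f i then p i * f i ^ y else 0))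
    (κ : ℝ) (hκ : 1 ≤ κ) (i : ℕ) (hi : (i : ℝ) / κ ≤ (M : ℝ) + 1) :
    ∑ j ∈ Finset.range (M + 1), (if f i ≤ f j then p j else 0)
      ≤ (f (Nat.floor ((i : ℝ) / κ)) / f i) ^ (Nat.floor ((i : ℝ) / κ)) := by
  set k := Nat.floor ((i : ℝ) / κ) with hk
  have hki : k ≤ i := by
    have h1 : (i : ℝ) / κ ≤ (i : ℝ) := div_le_self (by positivity) hκ
    calc k ≤ Nat.floor ((i : ℝ)) := Nat.floor_le_floor h1
      _ = i := Nat.floor_natCast i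
  have hfki : f k ≤ f i := hfmono hki
  have hfipos := hfpos i
  have hfkpos := hfpos k
  rcases le_or_gt (f i) (f k) with hle | hlt
  · have h1 : ∑ j ∈ range (M + 1), (if f i ≤ f j then p j else 0) ≤ 1 := by
      rw [← hsum]
      apply Finset.sum_le_sum
      intro j _
      split
      · exact le_refl _
      · exact hnn j
    have h2 : (1 : ℝ) ≤ (f k / f i) ^ k :=
      one_le_pow₀ ((one_le_div hfipos).2 hle)
    linarith
  · rcases le_or_gt M k with hMk | hkM
    · have hz : ∑ j ∈ range (M + 1), (if f i ≤ f j then p j else 0) = 0 := by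
        apply Finset.sum_eq_zero
        intro j hj
        rw [if_neg]
        have h1 : f j ≤ f M := hfmono (Nat.lt_succ_iff.mp (mem_range.mp hj))
        have h2 : f j ≤ f k := h1.trans (hfmono hMk)
        linarith
      rw [hz]; positivity
    · have key : (∑ j ∈ range (M + 1), (if f i ≤ f j then p j else 0)) * f i ^ k
          ≤ f k ^ k := by
        calc (∑ j ∈ range (M + 1), (if f i ≤ f j then p j else 0)) * f i ^ k
            = ∑ j ∈ range (M + 1), (if f i ≤ f j then p j * f i ^ k else 0) := by
              rw [Finset.sum_mul]
              apply Finset.sum_congr rfl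
              intro j _
              split <;> simp
          _ ≤ ∑ j ∈ range (M + 1), (if f k < f j then p j * f j ^ k else 0) := by
              apply Finset.sum_le_sum
              intro j _
              by_cases h : f i ≤ f j
              · rw [if_pos h, if_pos (lt_of_lt_of_le hlt h)]
                exact mul_le_mul_of_nonneg_left (pow_le_pow_left₀ hfipos.le h k) (hnn j)
              · rw [if_neg h]
                split
                · exact mul_nonneg (hnn j) (pow_nonneg (hfpos j).le k)
                · exact le_refl _
          _ = ∑ j ∈ range (M + 1), (if f j ≤ f k then p j * f j ^ k else 0) :=
              (hbal k hkM).symm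
          _ ≤ ∑ j ∈ range (M + 1), p j * f k ^ k := by
              apply Finset.sum_le_sum
              intro j _
              split
              · exact mul_le_mul_of_nonneg_left (pow_le_pow_left₀ (hfpos j).le ‹_› k) (hnn j)
              · exact mul_nonneg (hnn j) (pow_nonneg hfkpos.le k)
          _ = f k ^ k := by rw [← Finset.sum_mul, hsum, one_mul]
      rw [div_pow, le_div_iff₀ (by positivity)]
      exact key
end

section
/- For the affine function f(y) = a y + b with 0 < a < 1/e and b > 0, there exists κ ≥ 1 such that the series ∑_{i=1}^{∞} ( (a⌊i/κ⌋ + b)/(a i + b) )^{i/κ} · e^{a i + b} converges. -/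
/-- For the affine `f y = a y + b` with `0 < a < 1/e` and `b > 0`, there exists
`κ ≥ 1` such that `∑_{i=1}^∞ ((a⌊i/κ⌋ + b)/(a i + b))^{i/κ} e^{a i + b} < ∞`. -/
theorem affine_tilted_series_summable
    (a b : ℝ) (ha0 : 0 < a) (ha1 : a < (Real.exp 1)⁻¹) (hb : 0 < b) :
    ∃ κ : ℝ, 1 ≤ κ ∧
      Summable (fun i : ℕ =>
        ((a * (Nat.floor ((i : ℝ) / κ) : ℝ) + b) / (a * i + b))
            ^ ((i : ℝ) / κ) * Real.exp (a * i + b)) := by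
  set e := Real.exp 1 with he
  have he0 : 0 < e := Real.exp_pos 1
  have he1 : 1 ≤ e := by
    have := Real.add_one_le_exp (1 : ℝ); linarith
  refine ⟨e, he1, ?_⟩
  set K : ℝ := (e - 1) * b / (e * a) with hK
  set r : ℝ := Real.exp (a - e⁻¹) with hr
  have hr0 : 0 ≤ r := (Real.exp_pos _).le
  have hr1 : r < 1 := by
    rw [hr, Real.exp_lt_one_iff]
    linarith
  refine Summable.of_nonneg_of_le (f := fun i : ℕ => Real.exp (K + b) * r ^ i) ?_ ?_
    ((summable_geometric_of_lt_one hr0 hr1).mul_left _)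
  · intro i
    have hden : (0:ℝ) < a * i + b := by positivity
    have : (0:ℝ) ≤ a * (Nat.floor ((i : ℝ) / e) : ℝ) + b := by positivity
    positivity
  · intro i
    have hden : (0:ℝ) < a * i + b := by positivity
    have hie : (0:ℝ) ≤ (i : ℝ) / e := by positivity
    have hi0 : (0:ℝ) ≤ (i : ℝ) := Nat.cast_nonneg i
    have hbase0 : (0:ℝ) ≤ (a * (Nat.floor ((i : ℝ) / e) : ℝ) + b) / (a * i + b) := by
      have : (0:ℝ) ≤ a * (Nat.floor ((i : ℝ) / e) : ℝ) + b := by positivity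
      positivity
    have hfl : ((Nat.floor ((i : ℝ) / e) : ℝ)) ≤ (i : ℝ) / e := Nat.floor_le hie
    set U : ℝ := (e - 1) * b / (a * i + b) with hU
    have hU0 : 0 ≤ U := by
      apply div_nonneg _ hden.le
      nlinarith
    -- base bound
    have hbase : (a * (Nat.floor ((i : ℝ) / e) : ℝ) + b) / (a * i + b)
        ≤ Real.exp (U - 1) := by
      have key : (1 + U) * (a * i + b) = a * i + e * b := by
        rw [hU]
        field_simp
        ring
      have h5 : (1 + U) / e ≤ Real.exp (U - 1) := by
        rw [Real.exp_sub, ← he]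
        gcongr
        linarith [Real.add_one_le_exp U]
      have keq : a * ((i:ℝ)/e) + b = (1 + U) / e * (a * i + b) := by
        rw [div_mul_eq_mul_div, key]
        field_simp
      calc (a * (Nat.floor ((i : ℝ) / e) : ℝ) + b) / (a * i + b)
          ≤ (a * ((i:ℝ)/e) + b) / (a * i + b) := by gcongr
        _ = (1 + U) / e * (a * i + b) / (a * i + b) := by rw [keq]
        _ = (1 + U) / e := by
            rw [mul_div_assoc, div_self hden.ne', mul_one]
        _ ≤ Real.exp (U - 1) := h5
    have h7 : ((a * (Nat.floor ((i : ℝ) / e) : ℝ) + b) / (a * i + b)) ^ ((i:ℝ)/e)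
        ≤ Real.exp ((U - 1) * ((i:ℝ)/e)) := by
      calc ((a * (Nat.floor ((i : ℝ) / e) : ℝ) + b) / (a * i + b)) ^ ((i:ℝ)/e)
          ≤ (Real.exp (U - 1)) ^ ((i:ℝ)/e) :=
            Real.rpow_le_rpow hbase0 hbase hie
        _ = Real.exp ((U - 1) * ((i:ℝ)/e)) := by
            rw [← Real.exp_mul]
    have hKb : U * ((i:ℝ)/e) ≤ K := by
      rw [hU, hK, div_mul_div_comm, div_le_div_iff₀ (by positivity) (by positivity)]
      nlinarith [mul_nonneg (mul_nonneg (mul_nonneg (sub_nonneg.mpr he1) hb.le) he0.le) hb.le]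
    calc ((a * (Nat.floor ((i : ℝ) / e) : ℝ) + b) / (a * i + b)) ^ ((i:ℝ)/e)
          * Real.exp (a * i + b)
        ≤ Real.exp ((U - 1) * ((i:ℝ)/e)) * Real.exp (a * i + b) :=
          mul_le_mul_of_nonneg_right h7 (Real.exp_pos _).le
      _ ≤ Real.exp (K - (i:ℝ)/e) * Real.exp (a * i + b) := by
          apply mul_le_mul_of_nonneg_right _ (Real.exp_pos _).le
          apply Real.exp_le_exp.mpr
          nlinarith
      _ = Real.exp (K + b) * r ^ i := by
          rw [hr, ← Real.exp_nat_mul, ← Real.exp_add, ← Real.exp_add]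
          congr 1
          field_simp
          ring
end

section
/- Existence of a truncated balanced distribution: let f : ℕ₀ → ℝ₊ be strictly increasing up to c₀ and let 1 ≤ M ≤ c₀. Then there exists a probability distribution P_W supported on {f(0), f(1), ..., f(M)} such that for all y ∈ {0, 1, ..., M-1}, E[W^y 1{W ≤ f(y)}] = E[W^y 1{W > f(y)}]. -/
open Finset

private lemma tbde_mono (c₀ : ℕ) (f : ℕ → ℝ)
    (hinc : ∀ i, 1 ≤ i → i ≤ c₀ → f (i - 1) < f i) :
    ∀ b, b ≤ c₀ → ∀ a, a < b → f a < f b := by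
  intro b
  induction b with
  | zero => intro _ a ha; omega
  | succ n ih =>
    intro hb a ha
    have h1 : f n < f (n + 1) := by
      have := hinc (n + 1) (by omega) hb
      simpa using this
    rcases Nat.lt_succ_iff_lt_or_eq.mp ha with h | rfl
    · exact (ih (by omega) a h).trans h1
    · exact h1

private lemma tbde_exists_q (M : ℕ) (f : ℕ → ℝ) (hfpos : ∀ n, 0 < f n)
    (hmono : ∀ a b, a ≤ M → b ≤ M → a < b → f a < f b) :
    ∀ y, y ≤ M → ∃ q : ℕ → ℕ → ℝ,
      ∀ i, y ≤ i → i ≤ M →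
        (∀ j, 0 ≤ q i j) ∧
        (∀ y' < y, ∑ j ∈ range (y' + 1), q i j * f j ^ y'
            = (∑ j ∈ Ico (y' + 1) y, q i j * f j ^ y') + f i ^ y') := by
  intro y
  induction y with
  | zero =>
    intro _
    exact ⟨fun _ _ => 0, fun i _ _ => ⟨fun j => le_rfl, fun y' hy' => by omega⟩⟩
  | succ y ih =>
    intro hy1
    have hyM : y ≤ M := by omega
    obtain ⟨q, hq⟩ := ih hyM
    have hqy := hq y le_rfl hyM
    set den : ℝ := f y ^ y + ∑ j ∈ range y, q y j * f j ^ y with hden_def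
    have hsum_nonneg : ∀ i, y ≤ i → i ≤ M → 0 ≤ ∑ j ∈ range y, q i j * f j ^ y := by
      intro i hi hiM
      refine Finset.sum_nonneg fun j _ => ?_
      exact mul_nonneg ((hq i hi hiM).1 j) (pow_nonneg (hfpos j).le y)
    have hden : 0 < den := by
      have := hsum_nonneg y le_rfl hyM
      have := pow_pos (hfpos y) y
      linarith
    set num : ℕ → ℝ := fun i => f i ^ y - ∑ j ∈ range y, q i j * f j ^ y with hnum_def
    have hnum : ∀ i, y + 1 ≤ i → i ≤ M → 0 < num i := by
      intro i hi hiM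
      rcases Nat.eq_zero_or_pos y with hy0 | hypos
      · subst hy0
        simp [hnum_def]
      · obtain ⟨s, rfl⟩ := Nat.exists_eq_succ_of_ne_zero (Nat.pos_iff_ne_zero.mp hypos)
        have hEq := (hq i (by omega) hiM).2 s (Nat.lt_succ_self s)
        rw [Finset.Ico_self, Finset.sum_empty, zero_add] at hEq
        -- hEq : ∑ j ∈ range (s+1), q i j * f j ^ s = f i ^ s
        have hsM : s ≤ M := by omega
        have hbound : ∑ j ∈ range (s + 1), q i j * f j ^ (s + 1)
            ≤ f s * ∑ j ∈ range (s + 1), q i j * f j ^ s := by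
          rw [Finset.mul_sum]
          refine Finset.sum_le_sum fun j hj => ?_
          have hj' : j ≤ s := Nat.lt_succ_iff.mp (Finset.mem_range.mp hj)
          have hfj : f j ≤ f s := by
            rcases eq_or_lt_of_le hj' with rfl | h
            · exact le_rfl
            · exact (hmono j s (by omega) hsM h).le
          have hnn : 0 ≤ q i j * f j ^ s :=
            mul_nonneg ((hq i (by omega) hiM).1 j) (pow_nonneg (hfpos j).le s)
          calc q i j * f j ^ (s + 1) = (q i j * f j ^ s) * f j := by ring
            _ ≤ (q i j * f j ^ s) * f s := mul_le_mul_of_nonneg_left hfj hnn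
            _ = f s * (q i j * f j ^ s) := by ring
        have hfs : f s < f i := hmono s i hsM hiM (by omega)
        have hpow : 0 < f i ^ s := pow_pos (hfpos i) s
        have : ∑ j ∈ range (s + 1), q i j * f j ^ (s + 1) < f i ^ (s + 1) := by
          calc ∑ j ∈ range (s + 1), q i j * f j ^ (s + 1)
              ≤ f s * f i ^ s := by rw [hEq] at hbound; exact hbound
            _ < f i * f i ^ s := mul_lt_mul_of_pos_right hfs hpow
            _ = f i ^ (s + 1) := by ring
        have hshow : (0:ℝ) < f i ^ (s+1) - ∑ j ∈ range (s+1), q i j * f j ^ (s+1) := by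
          linarith
        simpa [hnum_def] using hshow
    refine ⟨fun i j => if j = y then num i / den else q i j + (num i / den) * q y j,
      fun i hi hiM => ⟨?_, ?_⟩⟩
    · intro j
      have hgi : 0 ≤ num i / den := div_nonneg (hnum i hi hiM).le hden.le
      by_cases hj : j = y
      · simpa [hj] using hgi
      · simp only [hj, if_false]
        exact add_nonneg ((hq i (by omega) hiM).1 j) (mul_nonneg hgi (hqy.1 j))
    · intro y' hy'
      have hgden : num i / den * den = num i := div_mul_cancel₀ _ hden.ne'
      rcases Nat.lt_succ_iff_lt_or_eq.mp hy' with hlt | hE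
      · -- y' < y
        have Ei := (hq i (by omega) hiM).2 y' hlt
        have Ey := hqy.2 y' hlt
        have hL : ∀ (r : ℕ → ℝ), ∑ j ∈ range (y' + 1),
              (if j = y then num i / den else r j + (num i / den) * q y j) * f j ^ y'
            = (∑ j ∈ range (y' + 1), r j * f j ^ y')
              + (num i / den) * ∑ j ∈ range (y' + 1), q y j * f j ^ y' := by
          intro r
          rw [Finset.mul_sum, ← Finset.sum_add_distrib]
          refine Finset.sum_congr rfl fun j hj => ?_
          have : j ≠ y := by
            have := Finset.mem_range.mp hj; omega
          simp only [this, if_false]; ring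
        have hR : ∑ j ∈ Ico (y' + 1) y,
              (if j = y then num i / den else q i j + (num i / den) * q y j) * f j ^ y'
            = (∑ j ∈ Ico (y' + 1) y, q i j * f j ^ y')
              + (num i / den) * ∑ j ∈ Ico (y' + 1) y, q y j * f j ^ y' := by
          rw [Finset.mul_sum, ← Finset.sum_add_distrib]
          refine Finset.sum_congr rfl fun j hj => ?_
          have : j ≠ y := by
            have := (Finset.mem_Ico.mp hj).2; omega
          simp only [this, if_false]; ring
        rw [Finset.sum_Ico_succ_top (by omega : y' + 1 ≤ y), hL, hR]
        beta_reduce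
        rw [if_pos rfl, Ei, Ey]
        ring
      · -- y' = y
        subst hE
        rw [Finset.Ico_self, Finset.sum_empty, zero_add, Finset.sum_range_succ]
        beta_reduce
        rw [if_pos rfl]
        have hL : ∑ j ∈ range y',
              (if j = y' then num i / den else q i j + (num i / den) * q y' j) * f j ^ y'
            = (∑ j ∈ range y', q i j * f j ^ y')
              + (num i / den) * ∑ j ∈ range y', q y' j * f j ^ y' := by
          rw [Finset.mul_sum, ← Finset.sum_add_distrib]
          refine Finset.sum_congr rfl fun j hj => ?_
          have : j ≠ y' := by
            have := Finset.mem_range.mp hj; omega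
          simp only [this, if_false]; ring
        rw [hL]
        have hnum_eq : num i = f i ^ y' - ∑ j ∈ range y', q i j * f j ^ y' := by
          rw [hnum_def]
        have hgden' : num i / den * f y' ^ y'
              + num i / den * (∑ j ∈ range y', q y' j * f j ^ y') = num i := by
          rw [← mul_add, ← hden_def]
          exact hgden
        linarith [hgden', hnum_eq]

/-- Existence of a truncated balanced distribution: `f : ℕ → ℝ₊` strictly
increasing up to `c₀` (i.e. `f (i-1) < f i` for `1 ≤ i ≤ c₀`) and `1 ≤ M ≤ c₀`.
Then there is a probability distribution supported on `{f 0, ..., f M}` (given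
by a probability vector `p` of point masses) such that for all `y < M`,
`E[W^y 1{W ≤ f y}] = E[W^y 1{W > f y}]`. -/
theorem truncated_balanced_distribution_exists
    (c₀ M : ℕ) (hM1 : 1 ≤ M) (hMc : M ≤ c₀)
    (f : ℕ → ℝ) (hfpos : ∀ n, 0 < f n)
    (hinc : ∀ i, 1 ≤ i → i ≤ c₀ → f (i - 1) < f i) :
    ∃ p : ℕ → ℝ,
      (∀ i, 0 ≤ p i) ∧
      (∑ i ∈ Finset.range (M + 1), p i = 1) ∧
      (∀ y < M,
        ∑ i ∈ Finset.range (M + 1), (if f i ≤ f y then p i * f i ^ y else 0)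
          = ∑ i ∈ Finset.range (M + 1),
              (if f y < f i then p i * f i ^ y else 0)) := by
  have hmono : ∀ a b, a ≤ M → b ≤ M → a < b → f a < f b := by
    intro a b _ hb hab
    exact tbde_mono c₀ f hinc b (le_trans hb hMc) a hab
  obtain ⟨q, hq⟩ := tbde_exists_q M f hfpos hmono M le_rfl
  have hqM := hq M le_rfl le_rfl
  -- the unnormalized vector
  set p' : ℕ → ℝ := fun j => if j = M then 1 else q M j with hp'_def
  have hp'_nonneg : ∀ j, 0 ≤ p' j := by
    intro j
    by_cases hj : j = M
    · simp [hp'_def, hj]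
    · simpa [hp'_def, hj] using hqM.1 j
  set S : ℝ := ∑ j ∈ range (M + 1), p' j with hS_def
  have hS : 0 < S := by
    rw [hS_def, Finset.sum_range_succ]
    have h1 : (0 : ℝ) ≤ ∑ j ∈ range M, p' j :=
      Finset.sum_nonneg fun j _ => hp'_nonneg j
    simp only [hp'_def, if_pos rfl]
    linarith
  refine ⟨fun j => p' j / S, fun j => div_nonneg (hp'_nonneg j) hS.le, ?_, ?_⟩
  · rw [← Finset.sum_div, ← hS_def, div_self hS.ne']
  · intro y hy
    have hyM : y ≤ M := hy.le
    have hiff : ∀ i, i ≤ M → (f i ≤ f y ↔ i ≤ y) := by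
      intro i hiM
      constructor
      · intro h
        by_contra hc
        exact absurd ((hmono y i hyM hiM (by omega)).trans_le h) (lt_irrefl _)
      · intro h
        rcases eq_or_lt_of_le h with rfl | h'
        · exact le_rfl
        · exact (hmono i y hiM hyM h').le
    have hL : ∑ i ∈ Finset.range (M + 1), (if f i ≤ f y then p' i / S * f i ^ y else 0)
        = ∑ i ∈ range (y + 1), p' i / S * f i ^ y := by
      rw [← Finset.sum_filter]
      refine Finset.sum_congr ?_ fun _ _ => rfl
      ext i
      simp only [Finset.mem_filter, Finset.mem_range]
      constructor
      · rintro ⟨hi, hfi⟩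
        have := (hiff i (by omega)).mp hfi
        omega
      · intro hi
        have hi' : i ≤ y := by omega
        exact ⟨by omega, (hiff i (by omega)).mpr hi'⟩
    have hR : ∑ i ∈ Finset.range (M + 1), (if f y < f i then p' i / S * f i ^ y else 0)
        = ∑ i ∈ Ico (y + 1) (M + 1), p' i / S * f i ^ y := by
      rw [← Finset.sum_filter]
      refine Finset.sum_congr ?_ fun _ _ => rfl
      ext i
      simp only [Finset.mem_filter, Finset.mem_range, Finset.mem_Ico]
      constructor
      · rintro ⟨hi, hfi⟩
        have : ¬ (i ≤ y) := fun hc => absurd ((hiff i (by omega)).mpr hc) (not_le.mpr hfi)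
        omega
      · intro hi
        refine ⟨by omega, ?_⟩
        have : ¬ (f i ≤ f y) := by
          rw [hiff i (by omega)]; omega
        exact lt_of_not_ge this
    rw [hL, hR]
    have hEq := hqM.2 y hy
    have hsplitR : ∑ i ∈ Ico (y + 1) (M + 1), p' i / S * f i ^ y
        = (∑ i ∈ Ico (y + 1) M, q M i / S * f i ^ y) + 1 / S * f M ^ y := by
      rw [Finset.sum_Ico_succ_top (by omega : y + 1 ≤ M)]
      congr 1
      · refine Finset.sum_congr rfl fun i hi => ?_
        have : i ≠ M := by have := (Finset.mem_Ico.mp hi).2; omega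
        simp [hp'_def, this]
      · simp [hp'_def]
    rw [hsplitR]
    have hLeq : ∑ i ∈ range (y + 1), p' i / S * f i ^ y
        = ∑ i ∈ range (y + 1), q M i / S * f i ^ y := by
      refine Finset.sum_congr rfl fun i hi => ?_
      have : i ≠ M := by have := Finset.mem_range.mp hi; omega
      simp [hp'_def, this]
    rw [hLeq]
    have h1 : ∑ i ∈ range (y + 1), q M i / S * f i ^ y
        = (∑ i ∈ range (y + 1), q M i * f i ^ y) / S := by
      rw [Finset.sum_div]
      exact Finset.sum_congr rfl fun i _ => by ring
    have h2 : ∑ i ∈ Ico (y + 1) M, q M i / S * f i ^ y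
        = (∑ i ∈ Ico (y + 1) M, q M i * f i ^ y) / S := by
      rw [Finset.sum_div]
      exact Finset.sum_congr rfl fun i _ => by ring
    rw [h1, h2, hEq]
    ring
end
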